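/- arXiv:math/0106003 — 8 statements merged into one kernel-verified Lean document; each statement's English description precedes it below -/
import Mathlib

section
/- Let (X,d) be a length space, ρ > 0, and a, x ∈ X with d(a,x) ≤ ρ. Then for every r with 0 ≤ r ≤ ρ there exists c ∈ X such that the open ball B(c, r/2) is contained in B(a,ρ) ∩ B(x,r). -/
open Set

/-- A metric space is a length space if every pair of points is joined by an
isometric map of the interval `[0, dist x y]` realizing the distance. -/
def IsLengthSpace (X : Type*) [MetricSpace X] : Prop :=
  ∀ x y : X, ∃ f : ℝ → X, f 0 = x ∧ f (dist x y) = y ∧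
    ∀ s ∈ Set.Icc (0 : ℝ) (dist x y), ∀ t ∈ Set.Icc (0 : ℝ) (dist x y),
      dist (f s) (f t) = |s - t|

theorem IsLengthSpace.exists_dist_eq_of_le {X : Type*} [MetricSpace X] (hX : IsLengthSpace X)
    (a x : X) {s : ℝ} (hs0 : 0 ≤ s) (hs : s ≤ dist a x) :
    ∃ c : X, dist c a = s ∧ dist c x = dist a x - s := by
  obtain ⟨f, hf0, hfx, hiso⟩ := hX a x
  have hs_mem : s ∈ Icc 0 (dist a x) := ⟨hs0, hs⟩
  refine ⟨f s, ?_, ?_⟩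
  · rw [← hf0, hiso s hs_mem 0 ⟨le_rfl, dist_nonneg⟩, sub_zero, abs_of_nonneg hs0]
  · rw [← hfx, hiso s hs_mem _ ⟨dist_nonneg, le_rfl⟩, hfx, abs_sub_comm,
      abs_of_nonneg (sub_nonneg.mpr hs)]

theorem stmt_4_general {X : Type*} [MetricSpace X] (hX : IsLengthSpace X)
    (ρ : ℝ) (a x : X) (hd : dist a x ≤ ρ)
    (r : ℝ) (hr0 : 0 ≤ r) (hrρ : r ≤ ρ) :
    ∃ c : X, Metric.ball c (r / 2) ⊆ Metric.ball a ρ ∩ Metric.ball x r := by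
  rcases lt_or_ge (dist a x) (r / 2) with hnear | hfar
  · exact ⟨a, subset_inter (Metric.ball_subset_ball (by linarith))
      (Metric.ball_subset_ball' (by linarith))⟩
  · -- walk from `a` towards `x` until the remaining distance to `x` is `r / 2`
    obtain ⟨c, hca, hcx⟩ :=
      hX.exists_dist_eq_of_le a x (s := dist a x - r / 2) (by linarith) (by linarith)
    exact ⟨c, subset_inter (Metric.ball_subset_ball' (by linarith))
      (Metric.ball_subset_ball' (by linarith))⟩

theorem stmt_4 {X : Type*} [MetricSpace X] (hX : IsLengthSpace X)
    (ρ : ℝ) (hρ : 0 < ρ) (a x : X) (hd : dist a x ≤ ρ)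
    (r : ℝ) (hr0 : 0 ≤ r) (hrρ : r ≤ ρ) :
    ∃ c : X, Metric.ball c (r / 2) ⊆ Metric.ball a ρ ∩ Metric.ball x r :=
  stmt_4_general hX ρ a x hd r hr0 hrρ
end

section
/- Let (X,d) be an Ahlfors regular length space of dimension λ up to R, i.e., k·r^λ ≤ H^λ(B(x,r)) ≤ K·r^λ for all 0 < r < R with constants 0 < k ≤ K < ∞. Then there exists k' > 0 such that for all a, x ∈ X and all r, ρ > 0 with r < R, r ≤ ρ and d(x,a) ≤ ρ, one has k'·r^λ ≤ H^λ(B(x,r) ∩ B(a,ρ)). -/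
/-!
Walking from `x` towards `a` along a geodesic for a distance `min (r / 2) (dist x a)` reaches a
point `y` whose ball of radius `r / 2` lies in `B(x, r) ∩ B(a, ρ)`; the lower Ahlfors bound for
that ball gives the claim with `k' = k / 2 ^ λ`.
-/

open MeasureTheory Set
open scoped ENNReal

namespace IsLengthSpace

variable {X : Type*} [MetricSpace X]

theorem exists_dist_eq_of_mem_Icc (hX : IsLengthSpace X) (x a : X) {t : ℝ}
    (ht : t ∈ Icc 0 (dist x a)) : ∃ y, dist x y = t ∧ dist y a = dist x a - t := by
  obtain ⟨f, hf0, hfa, hiso⟩ := hX x a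
  have h0 : (0 : ℝ) ∈ Icc 0 (dist x a) := ⟨le_rfl, dist_nonneg⟩
  have hd : dist x a ∈ Icc 0 (dist x a) := ⟨dist_nonneg, le_rfl⟩
  refine ⟨f t, ?_, ?_⟩
  · rw [← hf0, hiso 0 h0 t ht, zero_sub, abs_neg, abs_of_nonneg ht.1]
  · rw [← hfa, hiso t ht _ hd, abs_sub_comm, abs_of_nonneg (sub_nonneg.2 ht.2), hfa]

theorem exists_ball_subset_ball_inter_ball (hX : IsLengthSpace X) {x a : X} {r ρ : ℝ}
    (hr : 0 ≤ r) (hrρ : r ≤ ρ) (hxa : dist x a ≤ ρ) :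
    ∃ y, Metric.ball y (r / 2) ⊆ Metric.ball x r ∩ Metric.ball a ρ := by
  set t := min (r / 2) (dist x a)
  obtain ⟨y, hxy, hya⟩ :=
    hX.exists_dist_eq_of_mem_Icc x a (t := t) ⟨by positivity, min_le_right _ _⟩
  have hxy_le : dist x y ≤ r / 2 := hxy ▸ min_le_left _ _
  have hya_le : dist y a ≤ ρ - r / 2 := by
    rw [hya]
    rcases min_cases (r / 2) (dist x a) with ⟨ht, -⟩ | ⟨ht, -⟩ <;> simp only [t, ht] <;> linarith
  refine ⟨y, fun z hz => ⟨?_, ?_⟩⟩ <;> rw [Metric.mem_ball] at hz ⊢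
  · linarith [dist_triangle z y x, dist_comm x y]
  · linarith [dist_triangle z y a]

end IsLengthSpace

theorem stmt_5_general {X : Type*} [MetricSpace X] [MeasurableSpace X] [BorelSpace X]
    (hX : IsLengthSpace X) (l R k K : ℝ)
    (hk : 0 < k)
    (hreg : ∀ (x : X) (r : ℝ), 0 < r → r < R →
      ENNReal.ofReal (k * r ^ l) ≤ μH[l] (Metric.ball x r) ∧
      μH[l] (Metric.ball x r) ≤ ENNReal.ofReal (K * r ^ l)) :
    ∃ k' : ℝ, 0 < k' ∧ ∀ (a x : X) (r ρ : ℝ), 0 < r → 0 < ρ → r < R → r ≤ ρ →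
      dist x a ≤ ρ →
      ENNReal.ofReal (k' * r ^ l) ≤ μH[l] (Metric.ball x r ∩ Metric.ball a ρ) := by
  refine ⟨k / 2 ^ l, by positivity, fun a x r ρ hr _ hrR hrρ hxa => ?_⟩
  obtain ⟨y, hy⟩ := hX.exists_ball_subset_ball_inter_ball hr.le hrρ hxa
  calc ENNReal.ofReal (k / 2 ^ l * r ^ l)
      = ENNReal.ofReal (k * (r / 2) ^ l) := by
        rw [Real.div_rpow hr.le zero_le_two, mul_div_assoc', div_mul_eq_mul_div]
    _ ≤ μH[l] (Metric.ball y (r / 2)) := (hreg y (r / 2) (by positivity) (by linarith)).1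
    _ ≤ μH[l] (Metric.ball x r ∩ Metric.ball a ρ) := measure_mono hy

theorem stmt_5 {X : Type*} [MetricSpace X] [MeasurableSpace X] [BorelSpace X]
    (hX : IsLengthSpace X) (l R k K : ℝ)
    (hl : 0 < l) (hR : 0 < R) (hk : 0 < k) (hkK : k ≤ K)
    (hreg : ∀ (x : X) (r : ℝ), 0 < r → r < R →
      ENNReal.ofReal (k * r ^ l) ≤ μH[l] (Metric.ball x r) ∧
      μH[l] (Metric.ball x r) ≤ ENNReal.ofReal (K * r ^ l)) :
    ∃ k' : ℝ, 0 < k' ∧ ∀ (a x : X) (r ρ : ℝ), 0 < r → 0 < ρ → r < R → r ≤ ρ →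
      dist x a ≤ ρ →
      ENNReal.ofReal (k' * r ^ l) ≤ μH[l] (Metric.ball x r ∩ Metric.ball a ρ) :=
  stmt_5_general hX l R k K hk hreg
end

section
/- Let (X,d) be a metric space, a ∈ X, r > 0, λ > 0, and suppose there is σ₀ > 0 such that for each 0 < σ ≤ σ₀ there is a set Y_σ ⊆ X with d(z, Y_σ) < σ for all z ∈ X, and C := sup over σ ∈ (0, σ₀] of card(B(a,r) ∩ Y_σ) / (r/σ)^λ < ∞. Then H^λ(B(a, r/2)) ≤ 2^λ · C · r^λ. -/
open MeasureTheory Set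
open scoped ENNReal

theorem stmt_6 {X : Type*} [MetricSpace X] [MeasurableSpace X] [BorelSpace X]
    (a : X) (r l σ₀ C : ℝ) (hr : 0 < r) (hl : 0 < l) (hσ₀ : 0 < σ₀)
    (Y : ℝ → Set X)
    (hdense : ∀ σ : ℝ, 0 < σ → σ ≤ σ₀ → ∀ z : X, ∃ y ∈ Y σ, dist z y < σ)
    (hcard : ∀ σ : ℝ, 0 < σ → σ ≤ σ₀ → (Metric.ball a r ∩ Y σ).Finite ∧
      ((Metric.ball a r ∩ Y σ).ncard : ℝ) ≤ C * (r / σ) ^ l) :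
    μH[l] (Metric.ball a (r / 2)) ≤ ENNReal.ofReal ((2 : ℝ) ^ l * C * r ^ l) := by
  have hC : 0 ≤ C := by
    have h := (hcard σ₀ hσ₀ le_rfl).2
    have hp : (0 : ℝ) < (r / σ₀) ^ l := Real.rpow_pos_of_pos (div_pos hr hσ₀) l
    nlinarith [(Nat.cast_nonneg (Metric.ball a r ∩ Y σ₀).ncard : (0:ℝ) ≤ _)]
  set δ : ℝ := min σ₀ (r / 2) with hδdef
  have hδ : 0 < δ := lt_min hσ₀ (by linarith)
  set σ : ℕ → ℝ := fun n => δ / (n + 1) with hσdef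
  have hσpos : ∀ n, 0 < σ n := fun n => div_pos hδ (by positivity)
  have hσle : ∀ n, σ n ≤ σ₀ := by
    intro n
    have h1 : σ n ≤ δ := by
      rw [hσdef]
      exact div_le_self hδ.le (by simp [le_add_iff_nonneg_left])
    exact h1.trans (min_le_left _ _)
  have hσhalf : ∀ n, σ n ≤ r / 2 := by
    intro n
    have h1 : σ n ≤ δ := by
      rw [hσdef]
      exact div_le_self hδ.le (by simp [le_add_iff_nonneg_left])
    exact h1.trans (min_le_right _ _)
  have hfin : ∀ n, (Metric.ball a r ∩ Y (σ n)).Finite := fun n =>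
    (hcard (σ n) (hσpos n) (hσle n)).1
  haveI : ∀ n, Fintype ↥(Metric.ball a r ∩ Y (σ n)) := fun n => (hfin n).fintype
  -- covering sets
  have key := Measure.hausdorffMeasure_le_liminf_sum (X := X) l (Metric.ball a (r / 2))
    (l := Filter.atTop)
    (fun n => ENNReal.ofReal (2 * σ n))
    ?_
    (fun n (i : ↥(Metric.ball a r ∩ Y (σ n))) => Metric.closedBall (i : X) (σ n))
    ?_ ?_
  · refine key.trans ?_
    refine Filter.liminf_le_of_frequently_le' (Filter.Eventually.frequently ?_)
    refine Filter.Eventually.of_forall fun n => ?_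
    have hdiam : ∀ i : ↥(Metric.ball a r ∩ Y (σ n)),
        EMetric.diam (Metric.closedBall (i : X) (σ n)) ^ l
          ≤ ENNReal.ofReal ((2 * σ n) ^ l) := by
      intro i
      have h1 : EMetric.diam (Metric.closedBall (i : X) (σ n))
          ≤ ENNReal.ofReal (2 * σ n) := by
        refine EMetric.diam_le fun x hx y hy => ?_
        rw [edist_dist]
        refine ENNReal.ofReal_le_ofReal ?_
        rw [Metric.mem_closedBall] at hx hy
        have := dist_triangle x (i : X) y
        rw [dist_comm (i : X) y] at this
        linarith
      calc EMetric.diam (Metric.closedBall (i : X) (σ n)) ^ l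
          ≤ ENNReal.ofReal (2 * σ n) ^ l :=
            ENNReal.rpow_le_rpow h1 hl.le
        _ = ENNReal.ofReal ((2 * σ n) ^ l) := by
            rw [← ENNReal.ofReal_rpow_of_pos (by positivity)]
    calc (∑ i : ↥(Metric.ball a r ∩ Y (σ n)),
            EMetric.diam (Metric.closedBall (i : X) (σ n)) ^ l)
        ≤ ∑ _i : ↥(Metric.ball a r ∩ Y (σ n)), ENNReal.ofReal ((2 * σ n) ^ l) :=
          Finset.sum_le_sum fun i _ => hdiam i
      _ = (Fintype.card ↥(Metric.ball a r ∩ Y (σ n))) * ENNReal.ofReal ((2 * σ n) ^ l) := by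
          simp [Finset.sum_const, nsmul_eq_mul]
      _ = ENNReal.ofReal (((Metric.ball a r ∩ Y (σ n)).ncard : ℝ) * (2 * σ n) ^ l) := by
          have hcc : (Metric.ball a r ∩ Y (σ n)).ncard
              = Fintype.card ↥(Metric.ball a r ∩ Y (σ n)) := by
            rw [← Nat.card_coe_set_eq, Nat.card_eq_fintype_card]
          rw [ENNReal.ofReal_mul (by positivity), hcc]
          simp [ENNReal.ofReal_natCast]
      _ ≤ ENNReal.ofReal ((2 : ℝ) ^ l * C * r ^ l) := by
          apply ENNReal.ofReal_le_ofReal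
          have h2 := (hcard (σ n) (hσpos n) (hσle n)).2
          have hpos : (0 : ℝ) < (2 * σ n) ^ l := by positivity
          have heq : C * (r / σ n) ^ l * (2 * σ n) ^ l = (2 : ℝ) ^ l * C * r ^ l := by
            rw [mul_assoc, ← Real.mul_rpow (by positivity) (by positivity)]
            have : r / σ n * (2 * σ n) = 2 * r := by
              rw [div_mul_eq_mul_div, div_eq_iff (hσpos n).ne']; ring
            rw [this, Real.mul_rpow (by norm_num) hr.le]
            ring
          nlinarith [(Nat.cast_nonneg (Metric.ball a r ∩ Y (σ n)).ncard : (0:ℝ) ≤ _)]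
  · -- tendsto 0
    rw [← ENNReal.ofReal_zero]
    apply ENNReal.tendsto_ofReal
    have h0 : Filter.Tendsto σ Filter.atTop (nhds 0) := by
      simpa [hσdef, div_eq_mul_inv] using
        (tendsto_one_div_add_atTop_nhds_zero_nat.const_mul δ)
    simpa using h0.const_mul 2
  · exact Filter.Eventually.of_forall fun n i => by
      have h1 : EMetric.diam (Metric.closedBall (i : X) (σ n))
          ≤ ENNReal.ofReal (2 * σ n) := by
        refine EMetric.diam_le fun x hx y hy => ?_
        rw [edist_dist]
        refine ENNReal.ofReal_le_ofReal ?_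
        rw [Metric.mem_closedBall] at hx hy
        have := dist_triangle x (i : X) y
        rw [dist_comm (i : X) y] at this
        linarith
      exact h1
  · -- covering
    refine Filter.Eventually.of_forall fun n => fun z hz => ?_
    obtain ⟨y, hy, hdy⟩ := hdense (σ n) (hσpos n) (hσle n) z
    have hya : y ∈ Metric.ball a r := by
      rw [Metric.mem_ball] at hz ⊢
      have := dist_triangle y z a
      rw [dist_comm y z] at this
      have := hσhalf n
      linarith
    exact Set.mem_iUnion.2 ⟨⟨y, hya, hy⟩, Metric.mem_closedBall.2 hdy.le⟩
end

section
/- Let (X,d) be a metric space and ν a Borel measure on X. Suppose R > 0, λ > 0, k > 0, a ∈ X satisfy ν(B(a,R)) < ∞ and ν(B(x,r)) ≥ k·r^λ for all x ∈ B(a, R/2) and all 0 < r ≤ R/2. Then for every r ≤ R/2, H^λ(B(a, r/2)) ≤ 4^λ · k^{-1} · ν(B(a, 2r)). -/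
open MeasureTheory Set
open scoped ENNReal

theorem stmt_7 {X : Type*} [MetricSpace X] [MeasurableSpace X] [BorelSpace X]
    (ν : Measure X) (R l k : ℝ) (hR : 0 < R) (hl : 0 < l) (hk : 0 < k)
    (a : X) (hfin : ν (Metric.ball a R) < ⊤)
    (hlow : ∀ x ∈ Metric.ball a (R / 2), ∀ r : ℝ, 0 < r → r ≤ R / 2 →
      ENNReal.ofReal (k * r ^ l) ≤ ν (Metric.ball x r)) :
    ∀ r : ℝ, 0 < r → r ≤ R / 2 →
      μH[l] (Metric.ball a (r / 2)) ≤
        ENNReal.ofReal ((4 : ℝ) ^ l * k⁻¹) * ν (Metric.ball a (2 * r)) := by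
  intro r hr hr2
  have hVfin : ν (Metric.ball a (2 * r)) ≠ ∞ := by
    refine (lt_of_le_of_lt (measure_mono (Metric.ball_subset_ball (by linarith))) hfin).ne
  set V := ν (Metric.ball a (2 * r)) with hV
  rw [MeasureTheory.Measure.hausdorffMeasure_apply]
  refine iSup₂_le fun δ hδ => ?_
  -- choose a small real ε
  obtain ⟨ε, hε0, hεr, hεδ⟩ : ∃ ε : ℝ, 0 < ε ∧ ε ≤ r / 2 ∧ ENNReal.ofReal (2 * ε) ≤ δ := by
    rcases eq_or_ne δ ∞ with h | h
    · exact ⟨r / 2, by positivity, le_refl _, by simp [h]⟩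
    · have hδ0 : 0 < δ.toReal := ENNReal.toReal_pos hδ.ne' h
      refine ⟨min (r / 2) (δ.toReal / 4), by positivity, min_le_left _ _, ?_⟩
      calc ENNReal.ofReal (2 * min (r / 2) (δ.toReal / 4))
          ≤ ENNReal.ofReal δ.toReal := by
            refine ENNReal.ofReal_le_ofReal ?_
            have := min_le_right (r / 2) (δ.toReal / 4)
            linarith
        _ = δ := ENNReal.ofReal_toReal h
  -- maximal ε-separated subset of ball a (r/2)
  set S : Set (Set X) :=
    {Y | Y ⊆ Metric.ball a (r / 2) ∧ Y.Pairwise fun x y => ε ≤ dist x y} with hS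
  obtain ⟨Y, -, hYmax⟩ : ∃ Y, (∅ : Set X) ⊆ Y ∧ Maximal (· ∈ S) Y := by
    refine zorn_subset_nonempty S ?_ ∅ ⟨empty_subset _, pairwise_empty _⟩
    intro c hcS hchain hcne
    refine ⟨⋃₀ c, ⟨?_, ?_⟩, fun s hs => subset_sUnion_of_mem hs⟩
    · exact sUnion_subset fun s hs => (hcS hs).1
    · intro x hx y hy hxy
      obtain ⟨s, hs, hxs⟩ := hx
      obtain ⟨t, ht, hyt⟩ := hy
      rcases hchain.total hs ht with hst | hts
      · exact (hcS ht).2 (hst hxs) hyt hxy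
      · exact (hcS hs).2 hxs (hts hyt) hxy
  have hYsub : Y ⊆ Metric.ball a (r / 2) := hYmax.1.1
  have hYsep : Y.Pairwise fun x y => ε ≤ dist x y := hYmax.1.2
  -- maximality gives a covering property
  have hcov : ∀ x ∈ Metric.ball a (r / 2), ∃ y ∈ Y, dist x y < ε := by
    intro x hx
    by_contra h
    push_neg at h
    have hxY : x ∉ Y := fun hxY => absurd (h x hxY) (by simp [hε0])
    have : insert x Y ∈ S := by
      constructor
      · exact insert_subset hx hYsub
      · refine hYsep.insert fun y hy hxy => ?_
        exact ⟨h y hy, by rw [dist_comm]; exact h y hy⟩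
    exact hxY (hYmax.2 this (subset_insert _ _) (mem_insert _ _))
  -- the small balls around points of Y are disjoint, sit in ball a (2r)
  have hdisj : Pairwise (Function.onFun Disjoint (fun y : Y => Metric.ball (y : X) (ε / 2))) := by
    intro y z hyz
    have hsep : ε ≤ dist (y : X) (z : X) :=
      hYsep y.2 z.2 (fun h => hyz (Subtype.ext h))
    refine Metric.ball_disjoint_ball ?_
    linarith
  have hsubset : ∀ y : Y, Metric.ball (y : X) (ε / 2) ⊆ Metric.ball a (2 * r) := by
    intro y z hz
    have hy : dist (y : X) a < r / 2 := hYsub y.2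
    have hz' : dist z (y : X) < ε / 2 := hz
    have := dist_triangle z (y : X) a
    simp only [Metric.mem_ball]
    linarith
  -- lower bound for each small ball
  set c : ℝ≥0∞ := ENNReal.ofReal (k * (ε / 2) ^ l) with hc
  have hc0 : 0 < c := by
    rw [hc]
    exact ENNReal.ofReal_pos.2 (by positivity)
  have hcball : ∀ y : Y, c ≤ ν (Metric.ball (y : X) (ε / 2)) := by
    intro y
    refine hlow (y : X) ?_ (ε / 2) (by positivity) (by linarith)
    have hy : dist (y : X) a < r / 2 := hYsub y.2
    simp only [Metric.mem_ball]
    linarith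
  -- total mass bound
  have htsum : ∑' y : Y, ν (Metric.ball (y : X) (ε / 2)) ≤ V := by
    refine le_trans (MeasureTheory.tsum_meas_le_meas_iUnion_of_disjoint₀ ν
      (fun y => Metric.isOpen_ball.measurableSet.nullMeasurableSet)
      (fun y z hyz => (hdisj hyz).aedisjoint)) ?_
    exact measure_mono (iUnion_subset hsubset)
  -- Y is finite
  have hYfin : Finite Y := by
    rw [← Set.finite_univ_iff]
    have : {y : Y | c ≤ ν (Metric.ball (y : X) (ε / 2))} = univ :=
      eq_univ_of_forall fun y => hcball y
    rw [← this]
    exact ENNReal.finite_const_le_of_tsum_ne_top (ne_top_of_le_ne_top hVfin htsum) hc0.ne'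
  haveI := hYfin
  haveI : Fintype Y := Fintype.ofFinite Y
  set n : ℕ := Fintype.card Y with hn
  have hcard : (n : ℝ≥0∞) * c ≤ V := by
    calc (n : ℝ≥0∞) * c = ∑' _ : Y, c := by
          rw [tsum_fintype]
          simp [hn, Finset.sum_const, nsmul_eq_mul]
      _ ≤ ∑' y : Y, ν (Metric.ball (y : X) (ε / 2)) := ENNReal.tsum_le_tsum hcball
      _ ≤ V := htsum
  -- build the covering
  set e : Fin n ≃ Y := (Fintype.equivFin Y).symm with he
  set t : ℕ → Set X := fun i => if h : i < n then Metric.ball ((e ⟨i, h⟩ : X)) ε else ∅ with ht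
  have hcover : Metric.ball a (r / 2) ⊆ ⋃ i, t i := by
    intro x hx
    obtain ⟨y, hyY, hxy⟩ := hcov x hx
    set j : Fin n := e.symm ⟨y, hyY⟩ with hj
    refine mem_iUnion.2 ⟨(j : ℕ), ?_⟩
    have hjn : (j : ℕ) < n := j.isLt
    simp only [ht, dif_pos hjn]
    have : e ⟨(j : ℕ), hjn⟩ = ⟨y, hyY⟩ := by
      rw [show (⟨(j : ℕ), hjn⟩ : Fin n) = j from Fin.eta j hjn, hj, Equiv.apply_symm_apply]
    rw [this]
    exact Metric.mem_ball.2 hxy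
  have hdiam : ∀ i, EMetric.diam (t i) ≤ δ := by
    intro i
    by_cases h : i < n
    · simp only [ht, dif_pos h]
      calc EMetric.diam (Metric.ball ((e ⟨i, h⟩ : X)) ε)
          ≤ 2 * ENNReal.ofReal ε := by
            rw [← Metric.emetric_ball]
            exact EMetric.diam_ball
        _ = ENNReal.ofReal (2 * ε) := by
            rw [ENNReal.ofReal_mul (by norm_num)]
            norm_num
        _ ≤ δ := hεδ
    · simp [ht, dif_neg h, EMetric.diam, Metric.ediam_empty]
  have hdiam2 : ∀ i, EMetric.diam (t i) ≤ ENNReal.ofReal (2 * ε) := by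
    intro i
    by_cases h : i < n
    · simp only [ht, dif_pos h]
      calc EMetric.diam (Metric.ball ((e ⟨i, h⟩ : X)) ε)
          ≤ 2 * ENNReal.ofReal ε := by
            rw [← Metric.emetric_ball]
            exact EMetric.diam_ball
        _ = ENNReal.ofReal (2 * ε) := by
            rw [ENNReal.ofReal_mul (by norm_num)]
            norm_num
    · simp [ht, dif_neg h, EMetric.diam, Metric.ediam_empty]
  -- bound the sum
  have hsum : (∑' i, ⨆ _ : (t i).Nonempty, EMetric.diam (t i) ^ l)
      ≤ (n : ℝ≥0∞) * ENNReal.ofReal ((2 * ε) ^ l) := by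
    have hzero : ∀ i ∉ Finset.range n, (⨆ _ : (t i).Nonempty, EMetric.diam (t i) ^ l) = 0 := by
      intro i hi
      have h : ¬ i < n := by simpa using hi
      simp [ht, dif_neg h]
    rw [tsum_eq_sum hzero]
    calc ∑ i ∈ Finset.range n, ⨆ _ : (t i).Nonempty, EMetric.diam (t i) ^ l
        ≤ ∑ _i ∈ Finset.range n, ENNReal.ofReal ((2 * ε) ^ l) := by
          refine Finset.sum_le_sum fun i _ => ?_
          refine iSup_le fun _ => ?_
          calc EMetric.diam (t i) ^ l ≤ ENNReal.ofReal (2 * ε) ^ l :=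
                ENNReal.rpow_le_rpow (hdiam2 i) hl.le
            _ = ENNReal.ofReal ((2 * ε) ^ l) :=
                ENNReal.ofReal_rpow_of_pos (by positivity)
      _ = (n : ℝ≥0∞) * ENNReal.ofReal ((2 * ε) ^ l) := by
          rw [Finset.sum_const, Finset.card_range, nsmul_eq_mul]
  -- put everything together
  calc ⨅ (t' : ℕ → Set X) (_ : Metric.ball a (r / 2) ⊆ ⋃ n, t' n)
        (_ : ∀ n, EMetric.diam (t' n) ≤ δ),
        ∑' n, ⨆ _ : (t' n).Nonempty, EMetric.diam (t' n) ^ l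
      ≤ ∑' i, ⨆ _ : (t i).Nonempty, EMetric.diam (t i) ^ l := by
        refine iInf_le_of_le t ?_
        refine iInf_le_of_le hcover ?_
        exact iInf_le _ hdiam
    _ ≤ (n : ℝ≥0∞) * ENNReal.ofReal ((2 * ε) ^ l) := hsum
    _ = ENNReal.ofReal ((4 : ℝ) ^ l * k⁻¹) * ((n : ℝ≥0∞) * c) := by
        have key : (2 * ε) ^ l = ((4 : ℝ) ^ l * k⁻¹) * (k * (ε / 2) ^ l) := by
          have h1 : ((4 : ℝ) ^ l * k⁻¹) * (k * (ε / 2) ^ l)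
              = (4 : ℝ) ^ l * (ε / 2) ^ l := by
            field_simp
          rw [h1, ← Real.mul_rpow (by norm_num) (by positivity)]
          norm_num
          ring_nf
        rw [key, ENNReal.ofReal_mul (by positivity), hc]
        ring
    _ ≤ ENNReal.ofReal ((4 : ℝ) ^ l * k⁻¹) * V := by
        exact mul_le_mul_right hcard _
end

section
/- Let (X,d) be a metric space, λ > 0, U ⊆ X open, and {V_i = B̄(x_i, r_i)} a sequence of pairwise disjoint closed balls contained in U constructed greedily: R_{m+1} = sup{r ≤ ρ : there is x with B̄(x,r) ⊆ U \ (V_1 ∪ … ∪ V_m)}, and V_{m+1} is chosen with r_{m+1} > R_{m+1}/2 and B̄(x_{m+1}, r_{m+1}) ⊆ U \ (V_1 ∪ … ∪ V_m). Then either Σ_i r_i^λ = +∞ or H^λ(U \ ∪_i V_i) = 0. -/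
open MeasureTheory Set
open scoped ENNReal

theorem stmt_10 {X : Type*} [MetricSpace X] [MeasurableSpace X] [BorelSpace X]
    (l ρ : ℝ) (hl : 0 < l) (hρ : 0 < ρ) (U : Set X) (hU : IsOpen U)
    (x : ℕ → X) (r : ℕ → ℝ)
    (hr : ∀ m, 0 < r m ∧ r m ≤ ρ)
    (hsub : ∀ m, Metric.closedBall (x m) (r m) ⊆
      U \ ⋃ i ∈ Finset.range m, Metric.closedBall (x i) (r i))
    (hgreedy : ∀ m, ∀ s ≤ ρ, ∀ y : X,
      Metric.closedBall y s ⊆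
        U \ ⋃ i ∈ Finset.range m, Metric.closedBall (x i) (r i) →
      s < 2 * r m) :
    (∑' i, ENNReal.ofReal ((r i) ^ l)) = ⊤ ∨
    μH[l] (U \ ⋃ i, Metric.closedBall (x i) (r i)) = 0 := by
  by_cases htop : (∑' i, ENNReal.ofReal ((r i) ^ l)) = ⊤
  · exact Or.inl htop
  right
  -- terms tend to zero
  have h0 : Filter.Tendsto (fun n => ENNReal.ofReal (r n ^ l)) Filter.atTop (nhds 0) :=
    ENNReal.tendsto_atTop_zero_of_tsum_ne_top htop
  -- radii tend to zero (in the sense we need)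
  have hrsmall : ∀ ε : ℝ, 0 < ε → ∀ᶠ n in Filter.atTop, r n < ε := by
    intro ε hε
    have h1 : ∀ᶠ n in Filter.atTop, ENNReal.ofReal (r n ^ l) < ENNReal.ofReal (ε ^ l) := by
      refine h0.eventually_lt_const ?_
      simpa using ENNReal.ofReal_pos.2 (Real.rpow_pos_of_pos hε l)
    filter_upwards [h1] with n hn
    have h2 : r n ^ l < ε ^ l := by
      have := (ENNReal.ofReal_lt_ofReal_iff (Real.rpow_pos_of_pos hε l)).1 hn
      exact this
    exact (Real.rpow_lt_rpow_iff (hr n).1.le hε.le hl).1 h2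
  -- the key covering property
  have key : ∀ N : ℕ, (U \ ⋃ i, Metric.closedBall (x i) (r i)) ⊆
      ⋃ n, Metric.closedBall (x (n + N)) (3 * r (n + N)) := by
    intro N z hz
    obtain ⟨hzU, hz2⟩ := hz
    -- the set W is open and contains z
    set W : Set X := U \ ⋃ i ∈ Finset.range N, Metric.closedBall (x i) (r i) with hW
    have hWopen : IsOpen W := by
      apply hU.sdiff
      exact isClosed_biUnion_finset fun i _ => Metric.isClosed_closedBall
    have hzW : z ∈ W := by
      refine ⟨hzU, fun h => hz2 ?_⟩
      simp only [Set.mem_iUnion, Finset.mem_range] at h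
      obtain ⟨i, _, hi⟩ := h
      exact Set.mem_iUnion.2 ⟨i, hi⟩
    obtain ⟨ε, hε, hball⟩ := Metric.isOpen_iff.1 hWopen z hzW
    set s : ℝ := min (ε / 2) ρ with hs
    have hspos : 0 < s := lt_min (half_pos hε) hρ
    have hsρ : s ≤ ρ := min_le_right _ _
    have hsW : Metric.closedBall z s ⊆ W := by
      refine subset_trans ?_ hball
      intro w hw
      have : dist w z ≤ s := Metric.mem_closedBall.1 hw
      exact Metric.mem_ball.2 (lt_of_le_of_lt (this.trans (min_le_left _ _)) (half_lt_self hε))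
    -- find m with 2 * r m ≤ s
    obtain ⟨m, hm⟩ := (hrsmall (s / 2) (half_pos hspos)).exists
    have hm2 : ¬ (s < 2 * r m) := by linarith
    -- the ball must meet some closed ball
    have hint : ∃ n, (Metric.closedBall z s ∩ Metric.closedBall (x n) (r n)).Nonempty := by
      by_contra h
      push_neg at h
      apply hm2
      refine hgreedy m s hsρ z ?_
      intro w hw
      refine ⟨(hsW hw).1, fun hmem => ?_⟩
      simp only [Set.mem_iUnion, Finset.mem_range] at hmem
      obtain ⟨i, _, hi⟩ := hmem
      have hcon : w ∈ Metric.closedBall z s ∩ Metric.closedBall (x i) (r i) := ⟨hw, hi⟩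
      rw [h i] at hcon
      exact Set.notMem_empty w hcon
    classical
    set n := Nat.find hint with hn
    obtain ⟨w, hw1, hw2⟩ := Nat.find_spec hint
    have hmin : ∀ i < n, Metric.closedBall z s ∩ Metric.closedBall (x i) (r i) = ∅ := by
      intro i hi
      exact Set.not_nonempty_iff_eq_empty.1 (Nat.find_min hint hi)
    have hsubn : Metric.closedBall z s ⊆
        U \ ⋃ i ∈ Finset.range n, Metric.closedBall (x i) (r i) := by
      intro w' hw'
      refine ⟨(hsW hw').1, fun hmem => ?_⟩
      simp only [Set.mem_iUnion, Finset.mem_range] at hmem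
      obtain ⟨i, hi, hiw⟩ := hmem
      have : w' ∈ Metric.closedBall z s ∩ Metric.closedBall (x i) (r i) := ⟨hw', hiw⟩
      rw [hmin i hi] at this
      exact Set.notMem_empty w' this
    have hlt : s < 2 * r n := hgreedy n s hsρ z hsubn
    have hNle : N ≤ n := by
      by_contra hc
      push_neg at hc
      have hwW : w ∈ W := hsW hw1
      exact hwW.2 (Set.mem_iUnion.2 ⟨n, Set.mem_iUnion.2 ⟨Finset.mem_range.2 hc, hw2⟩⟩)
    refine Set.mem_iUnion.2 ⟨n - N, ?_⟩
    rw [Nat.sub_add_cancel hNle]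
    have : dist z (x n) ≤ dist z w + dist w (x n) := dist_triangle _ _ _
    have h1 : dist z w ≤ s := Metric.mem_closedBall'.1 hw1
    have h2 : dist w (x n) ≤ r n := Metric.mem_closedBall.1 hw2
    exact Metric.mem_closedBall.2 (by linarith)
  -- tail sums tend to zero
  have htail : Filter.Tendsto (fun N => ∑' n, ENNReal.ofReal (r (n + N) ^ l))
      Filter.atTop (nhds 0) := ENNReal.tendsto_sum_nat_add _ htop
  -- now bound the Hausdorff measure
  have hbound : ∀ ε : ℝ≥0∞, 0 < ε → μH[l] (U \ ⋃ i, Metric.closedBall (x i) (r i)) ≤ ε := by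
    intro ε hε
    rw [Measure.hausdorffMeasure_apply]
    refine iSup₂_le fun δ hδ => ?_
    -- choose N with small tail and small radii
    have hc6 : (ENNReal.ofReal (6 ^ l) : ℝ≥0∞) ≠ 0 := by
      simp [ENNReal.ofReal_eq_zero, not_le, Real.rpow_pos_of_pos (by norm_num : (0:ℝ) < 6) l]
    have hc6' : (ENNReal.ofReal (6 ^ l) : ℝ≥0∞) ≠ ⊤ := ENNReal.ofReal_ne_top
    have hεdiv : 0 < ε / ENNReal.ofReal (6 ^ l) := ENNReal.div_pos hε.ne' hc6'
    have hev1 : ∀ᶠ N in Filter.atTop,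
        (∑' n, ENNReal.ofReal (r (n + N) ^ l)) < ε / ENNReal.ofReal (6 ^ l) :=
      htail.eventually_lt_const hεdiv
    have hev2' : ∀ᶠ n in Filter.atTop, ENNReal.ofReal (6 * r n) < δ := by
      have : Filter.Tendsto (fun n => ENNReal.ofReal (6 * r n)) Filter.atTop (nhds 0) := by
        rw [ENNReal.tendsto_atTop_zero]
        intro η hη
        rcases eq_or_ne η ⊤ with h | h
        · exact ⟨0, fun n _ => h ▸ le_top⟩
        · have hηr : 0 < η.toReal := ENNReal.toReal_pos hη.ne' h
          obtain ⟨N, hN⟩ := (hrsmall (η.toReal / 6) (by linarith)).exists_forall_of_atTop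
          refine ⟨N, fun n hn => ?_⟩
          have := hN n hn
          calc ENNReal.ofReal (6 * r n) ≤ ENNReal.ofReal η.toReal :=
                ENNReal.ofReal_le_ofReal (by linarith)
            _ = η := ENNReal.ofReal_toReal h
      exact this.eventually_lt_const hδ
    obtain ⟨N1, hN1⟩ := Filter.eventually_atTop.1 hev2'
    obtain ⟨N, hNtail, hNN1⟩ := (hev1.and (Filter.eventually_ge_atTop N1)).exists
    -- use the cover by balls of radius 3 r
    have hdiam : ∀ n, EMetric.diam (Metric.closedBall (x (n + N)) (3 * r (n + N))) ≤ δ := by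
      intro n
      calc EMetric.diam (Metric.closedBall (x (n + N)) (3 * r (n + N)))
          ≤ 2 * ENNReal.ofReal (3 * r (n + N)) := by
            rw [← Metric.emetric_closedBall (by have := (hr (n + N)).1; positivity : (0:ℝ) ≤ 3 * r (n + N))]
            exact EMetric.diam_closedBall
        _ = ENNReal.ofReal (6 * r (n + N)) := by
            rw [show (6 : ℝ) * r (n + N) = 2 * (3 * r (n + N)) by ring,
              ENNReal.ofReal_mul (by norm_num : (0:ℝ) ≤ 2), ENNReal.ofReal_ofNat]
        _ ≤ δ := (hN1 (n + N) (le_trans hNN1 (Nat.le_add_left N n))).le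
    have hsum : (∑' n, ⨆ _ : (Metric.closedBall (x (n + N)) (3 * r (n + N))).Nonempty,
        EMetric.diam (Metric.closedBall (x (n + N)) (3 * r (n + N))) ^ l) ≤ ε := by
      calc (∑' n, ⨆ _ : (Metric.closedBall (x (n + N)) (3 * r (n + N))).Nonempty,
              EMetric.diam (Metric.closedBall (x (n + N)) (3 * r (n + N))) ^ l)
          ≤ ∑' n, EMetric.diam (Metric.closedBall (x (n + N)) (3 * r (n + N))) ^ l :=
            ENNReal.tsum_le_tsum fun n => iSup_le fun _ => le_rfl
        _ ≤ ∑' n, ENNReal.ofReal (6 ^ l) * ENNReal.ofReal (r (n + N) ^ l) := by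
            refine ENNReal.tsum_le_tsum fun n => ?_
            have hd : EMetric.diam (Metric.closedBall (x (n + N)) (3 * r (n + N))) ≤
                ENNReal.ofReal (6 * r (n + N)) := by
              rw [← Metric.emetric_closedBall (by have := (hr (n + N)).1; positivity : (0:ℝ) ≤ 3 * r (n + N))]
              refine le_trans EMetric.diam_closedBall ?_
              rw [show (6 : ℝ) * r (n + N) = 2 * (3 * r (n + N)) by ring,
                ENNReal.ofReal_mul (by norm_num : (0:ℝ) ≤ 2), ENNReal.ofReal_ofNat]
            calc EMetric.diam (Metric.closedBall (x (n + N)) (3 * r (n + N))) ^ l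
                ≤ ENNReal.ofReal (6 * r (n + N)) ^ l := ENNReal.rpow_le_rpow hd hl.le
              _ = ENNReal.ofReal ((6 * r (n + N)) ^ l) :=
                  ENNReal.ofReal_rpow_of_pos (by have := (hr (n + N)).1; positivity)
              _ = ENNReal.ofReal (6 ^ l) * ENNReal.ofReal (r (n + N) ^ l) := by
                  rw [Real.mul_rpow (by norm_num) (hr (n + N)).1.le,
                    ENNReal.ofReal_mul (Real.rpow_nonneg (by norm_num) l)]
        _ = ENNReal.ofReal (6 ^ l) * ∑' n, ENNReal.ofReal (r (n + N) ^ l) :=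
            ENNReal.tsum_mul_left
        _ ≤ ENNReal.ofReal (6 ^ l) * (ε / ENNReal.ofReal (6 ^ l)) := by
            exact mul_le_mul_right hNtail.le _
        _ ≤ ε := ENNReal.mul_div_le
    exact le_trans (iInf₂_le_of_le
      (fun n => Metric.closedBall (x (n + N)) (3 * r (n + N))) (key N)
      (iInf_le_of_le hdiam le_rfl)) hsum
  -- conclude
  refine le_antisymm ?_ zero_le
  refine ENNReal.le_of_forall_pos_le_add fun ε hε _ => ?_
  simpa using hbound ε (by exact_mod_cast hε)
end

section
/- Let (X,d) be a complete extended metric space and ν a Borel measure such that k·r^λ ≤ ν(B(x,r)) ≤ K·r^λ for all x ∈ X and 0 < r < R (with 0 < k ≤ K, λ > 0, R > 0). Then there is a constant c > 0 such that for every separable Borel set E with ν(E) < ∞, H^λ(E) < ∞ and c·H^λ(E) ≤ ν(E). -/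
open MeasureTheory TopologicalSpace Set EMetric
open scoped ENNReal

/-- Maximal `ρ`-separated subsets exist, by Zorn's lemma. -/
lemma aux_maxsep {X : Type*} [EMetricSpace X] (s : Set X) (ρ : ℝ≥0∞) (hρ : 0 < ρ) :
    ∃ S, S ⊆ s ∧ (∀ x ∈ S, ∀ y ∈ S, x ≠ y → ρ ≤ edist x y) ∧
      ∀ y ∈ s, ∃ x ∈ S, edist y x < ρ := by
  obtain ⟨S, hS⟩ := zorn_subset
      {S | S ⊆ s ∧ ∀ x ∈ S, ∀ y ∈ S, x ≠ y → ρ ≤ edist x y} (by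
    intro c hc hchain
    refine ⟨⋃₀ c, ⟨sUnion_subset fun t ht => (hc ht).1, ?_⟩, fun t ht => subset_sUnion_of_mem ht⟩
    rintro x hx y hy hxy
    obtain ⟨t1, ht1, hxt1⟩ := hx
    obtain ⟨t2, ht2, hyt2⟩ := hy
    rcases hchain.total ht1 ht2 with h | h
    · exact (hc ht2).2 x (h hxt1) y hyt2 hxy
    · exact (hc ht1).2 x hxt1 y (h hyt2) hxy)
  refine ⟨S, hS.prop.1, hS.prop.2, ?_⟩
  intro y hy
  by_cases hyS : y ∈ S
  · exact ⟨y, hyS, by simpa using hρ⟩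
  by_contra h
  push_neg at h
  have hmem : insert y S ∈ {S | S ⊆ s ∧ ∀ x ∈ S, ∀ y ∈ S, x ≠ y → ρ ≤ edist x y} := by
    refine ⟨insert_subset hy hS.prop.1, ?_⟩
    rintro x (rfl | hx) z (rfl | hz) hxz
    · exact absurd rfl hxz
    · exact h z hz
    · rw [edist_comm]; exact h x hx
    · exact hS.prop.2 x hx z hz hxz
  exact hyS (hS.2 hmem (subset_insert y S) (mem_insert y S))

/-- Outer approximation by open sets for separable sets, when balls of a fixed radius
have finite measure. -/
lemma aux_outerreg {X : Type*} [EMetricSpace X] [MeasurableSpace X] [BorelSpace X]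
    (ν : Measure X) {E : Set X} (hE : MeasurableSet E) (hsep : IsSeparable E)
    (e0 : ℝ≥0∞) (he0 : 0 < e0) (hfin : ∀ x : X, ν (EMetric.ball x e0) ≠ ∞)
    (ε : ℝ≥0∞) (hε : ε ≠ 0) :
    ∃ U, IsOpen U ∧ E ⊆ U ∧ ν U ≤ ν E + ε := by
  by_cases hne : E.Nonempty
  swap
  · refine ⟨∅, isOpen_empty, by simp [not_nonempty_iff_eq_empty.1 hne], by simp⟩
  obtain ⟨c, hcc, hEc⟩ := hsep
  have hcne : c.Nonempty := by
    rw [← closure_nonempty_iff]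
    exact hne.mono hEc
  obtain ⟨f, hf⟩ := hcc.exists_eq_range hcne
  set b : ℕ → Set X := fun n => EMetric.ball (f n) e0 with hb
  have hEb : E ⊆ ⋃ n, b n := by
    intro x hx
    obtain ⟨y, hyc, hxy⟩ := EMetric.mem_closure_iff.1 (hEc hx) e0 he0
    rw [hf] at hyc
    obtain ⟨n, rfl⟩ := hyc
    exact mem_iUnion.2 ⟨n, EMetric.mem_ball.2 hxy⟩
  set D : ℕ → Set X := disjointed b with hD
  have hDmeas : ∀ n, MeasurableSet (D n) :=
    MeasurableSet.disjointed fun n => EMetric.isOpen_ball.measurableSet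
  obtain ⟨δ, hδpos, hδsum⟩ := ENNReal.exists_pos_sum_of_countable hε ℕ
  have hres : ∀ n, IsFiniteMeasure (ν.restrict (b n)) := fun n =>
    ⟨by rw [Measure.restrict_apply_univ]; exact (hfin (f n)).lt_top⟩
  have hV : ∀ n : ℕ, ∃ V, E ∩ D n ⊆ V ∧ IsOpen V ∧
      ν.restrict (b n) V < ν.restrict (b n) (E ∩ D n) + δ n := by
    intro n
    haveI := hres n
    exact (E ∩ D n).exists_isOpen_lt_add (measure_ne_top _ _)
      (by exact_mod_cast (hδpos n).ne')
  choose V hVsub hVopen hVlt using hV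
  refine ⟨⋃ n, V n ∩ b n, isOpen_iUnion fun n => (hVopen n).inter EMetric.isOpen_ball,
    ?_, ?_⟩
  · intro x hx
    have : x ∈ ⋃ n, D n := by
      rw [hD, iUnion_disjointed]
      exact hEb hx
    obtain ⟨n, hn⟩ := mem_iUnion.1 this
    exact mem_iUnion.2 ⟨n, hVsub n ⟨hx, hn⟩, disjointed_subset b n hn⟩
  · have hsub : ∀ n, E ∩ D n ⊆ b n := fun n => (inter_subset_right).trans (disjointed_subset b n)
    calc ν (⋃ n, V n ∩ b n) ≤ ∑' n, ν (V n ∩ b n) := measure_iUnion_le _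
      _ = ∑' n, ν.restrict (b n) (V n) := by
          congr 1; ext n
          rw [Measure.restrict_apply (hVopen n).measurableSet]
      _ ≤ ∑' n, (ν.restrict (b n) (E ∩ D n) + δ n) :=
          ENNReal.tsum_le_tsum fun n => (hVlt n).le
      _ = ∑' n, ν.restrict (b n) (E ∩ D n) + ∑' n, (δ n : ℝ≥0∞) := ENNReal.tsum_add
      _ ≤ ν E + ε := by
          refine add_le_add ?_ hδsum.le
          have : ∀ n, ν.restrict (b n) (E ∩ D n) = ν (E ∩ D n) := by
            intro n
            rw [Measure.restrict_apply (hE.inter (hDmeas n)),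
              inter_eq_self_of_subset_left (hsub n)]
          simp_rw [this]
          rw [← measure_iUnion (fun m n hmn =>
              ((disjoint_disjointed b) hmn).mono inter_subset_right inter_subset_right)
              (fun n => hE.inter (hDmeas n))]
          exact measure_mono (iUnion_subset fun n => inter_subset_left)

/-- Covering bound: if every small ball centered in `s` lies in `U` and `ν` has the lower
Ahlfors bound, then `μH[l] s` is controlled by `ν U`. -/
lemma aux_coverbound {X : Type*} [EMetricSpace X] [MeasurableSpace X] [BorelSpace X]
    (ν : Measure X) (k l R : ℝ) (hk : 0 < k) (hl : 0 < l) (hR : 0 < R)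
    (hlow : ∀ (x : X) (r : ℝ), 0 < r → r < R →
      ENNReal.ofReal (k * r ^ l) ≤ ν (EMetric.ball x (ENNReal.ofReal r)))
    (s U : Set X) (hνU : ν U ≠ ∞) (e : ℝ) (he : 0 < e)
    (hball : ∀ x ∈ s, EMetric.ball x (ENNReal.ofReal e) ⊆ U) :
    μH[l] s ≤ ENNReal.ofReal (4 ^ l / k) * ν U := by
  rw [Measure.hausdorffMeasure_apply]
  refine iSup₂_le fun r hr => ?_
  -- choose a suitable radius ρ
  have hr1 : (0:ℝ) < (min r 1).toReal :=
    ENNReal.toReal_pos (lt_min hr zero_lt_one).ne'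
      ((min_le_right _ _).trans_lt ENNReal.one_lt_top).ne
  set ρ : ℝ := min (min e (R/2)) ((min r 1).toReal / 2) with hρdef
  have hρpos : 0 < ρ := lt_min (lt_min he (by linarith)) (by linarith)
  have hρe : ρ ≤ e := (min_le_left _ _).trans (min_le_left _ _)
  have hρR2 : ρ ≤ R / 2 := (min_le_left _ _).trans (min_le_right _ _)
  have hρR : ρ / 2 < R := by linarith
  have h2ρ : ENNReal.ofReal (2 * ρ) ≤ r := by
    have h1 : 2 * ρ ≤ (min r 1).toReal := by
      have := min_le_right (min e (R/2)) ((min r 1).toReal / 2)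
      have hle : ρ ≤ (min r 1).toReal / 2 := this
      linarith
    calc ENNReal.ofReal (2 * ρ) ≤ ENNReal.ofReal (min r 1).toReal :=
          ENNReal.ofReal_le_ofReal h1
      _ = min r 1 := ENNReal.ofReal_toReal
          ((min_le_right _ _).trans_lt ENNReal.one_lt_top).ne
      _ ≤ r := min_le_left _ _
  -- a maximal ρ-separated subset of s
  obtain ⟨S, hSs, hSsep, hScov⟩ := aux_maxsep s (ENNReal.ofReal ρ) (ENNReal.ofReal_pos.2 hρpos)
  set a : ℝ≥0∞ := ENNReal.ofReal (k * (ρ/2) ^ l) with ha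
  have ha0 : a ≠ 0 := (ENNReal.ofReal_pos.2 (by positivity)).ne'
  have ha_top : a ≠ ∞ := ENNReal.ofReal_ne_top
  have hlowB : ∀ x ∈ S, a ≤ ν (EMetric.ball x (ENNReal.ofReal (ρ/2))) :=
    fun x _ => hlow x (ρ/2) (by positivity) hρR
  have hBU : ∀ x ∈ S, EMetric.ball x (ENNReal.ofReal (ρ/2)) ⊆ U := fun x hx =>
    (EMetric.ball_subset_ball (ENNReal.ofReal_le_ofReal (by linarith))).trans
      (hball x (hSs hx))
  have hdisj : S.PairwiseDisjoint fun x => EMetric.ball x (ENNReal.ofReal (ρ/2)) := by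
    intro x hx y hy hxy
    refine Set.disjoint_left.2 fun z hzx hzy => ?_
    have hsep := hSsep x hx y hy hxy
    have : edist x y < ENNReal.ofReal ρ := by
      calc edist x y ≤ edist x z + edist z y := edist_triangle _ _ _
        _ = edist z x + edist z y := by rw [edist_comm x z]
        _ < ENNReal.ofReal (ρ/2) + ENNReal.ofReal (ρ/2) :=
            ENNReal.add_lt_add hzx hzy
        _ = ENNReal.ofReal ρ := by
            rw [← ENNReal.ofReal_add (by linarith) (by linarith)]; norm_num
    exact this.not_ge hsep
  have hfinsum : ∀ T : Finset X, ↑T ⊆ S → T.card • a ≤ ν U := by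
    intro T hT
    calc T.card • a ≤ ∑ x ∈ T, ν (EMetric.ball x (ENNReal.ofReal (ρ/2))) :=
          Finset.card_nsmul_le_sum T _ a fun x hx => hlowB x (hT hx)
      _ = ν (⋃ x ∈ T, EMetric.ball x (ENNReal.ofReal (ρ/2))) :=
          (measure_biUnion_finset (hdisj.subset hT)
            fun x _ => EMetric.isOpen_ball.measurableSet).symm
      _ ≤ ν U := measure_mono (iUnion₂_subset fun x hx => hBU x (hT hx))
  have hSfin : S.Finite := by
    by_contra hinf
    have hinf' : S.Infinite := hinf
    obtain ⟨n, hn⟩ : ∃ n : ℕ, ν U / a < n := ENNReal.exists_nat_gt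
      (ENNReal.div_lt_top hνU ha0).ne
    have hn' : ν U < n • a := by
      rw [nsmul_eq_mul]
      rwa [ENNReal.div_lt_iff (Or.inl ha0) (Or.inl ha_top)] at hn
    obtain ⟨T, hTS, hTcard⟩ := hinf'.exists_subset_card_eq n
    have := hfinsum T hTS
    rw [hTcard] at this
    exact hn'.not_ge this
  set T : Finset X := hSfin.toFinset with hTdef
  have hTS : ↑T = S := hSfin.coe_toFinset
  set lst : List X := T.toList with hlst
  have hlen : lst.length = T.card := Finset.length_toList T
  set t : ℕ → Set X := fun n =>
    if h : n < lst.length then EMetric.ball (lst.get ⟨n, h⟩) (ENNReal.ofReal ρ) else ∅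
    with ht
  have hcov : s ⊆ ⋃ n, t n := by
    intro y hy
    obtain ⟨x, hxS, hyx⟩ := hScov y hy
    have hxT : x ∈ lst := Finset.mem_toList.2 (by rw [← hTS] at hxS; exact_mod_cast hxS)
    obtain ⟨⟨n, hn⟩, hget⟩ := List.mem_iff_get.1 hxT
    refine mem_iUnion.2 ⟨n, ?_⟩
    rw [ht]
    simp only [dif_pos hn, hget]
    exact EMetric.mem_ball.2 hyx
  have h2r : (2:ℝ≥0∞) * ENNReal.ofReal ρ = ENNReal.ofReal (2 * ρ) := by
    rw [ENNReal.ofReal_mul (by norm_num), ENNReal.ofReal_ofNat]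
  have hdiam : ∀ n, EMetric.diam (t n) ≤ r := by
    intro n
    rw [ht]
    by_cases h : n < lst.length
    · simp only [dif_pos h]
      exact EMetric.diam_ball.trans (by rw [h2r]; exact h2ρ)
    · simp [dif_neg h]
      exact (le_of_eq Metric.ediam_empty).trans zero_le
  set c0 : ℝ≥0∞ := ENNReal.ofReal ((2 * ρ) ^ l) with hc0
  have hsum : (∑' n, ⨆ (_ : (t n).Nonempty), EMetric.diam (t n) ^ l)
      ≤ T.card * c0 := by
    calc (∑' n, ⨆ (_ : (t n).Nonempty), EMetric.diam (t n) ^ l)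
        ≤ ∑' n, (if n < lst.length then c0 else 0) := by
          refine ENNReal.tsum_le_tsum fun n => ?_
          by_cases h : n < lst.length
          · rw [if_pos h]
            refine iSup_le fun _ => ?_
            have hd : EMetric.diam (t n) ≤ ENNReal.ofReal (2 * ρ) := by
              rw [ht]; simp only [dif_pos h]
              exact EMetric.diam_ball.trans_eq h2r
            calc EMetric.diam (t n) ^ l ≤ ENNReal.ofReal (2 * ρ) ^ l :=
                  ENNReal.rpow_le_rpow hd hl.le
              _ = c0 := ENNReal.ofReal_rpow_of_pos (by linarith)
          · rw [if_neg h]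
            have : t n = ∅ := by rw [ht]; simp [dif_neg h]
            simp [this]
      _ = ∑ n ∈ Finset.range lst.length, (if n < lst.length then c0 else 0) :=
          tsum_eq_sum fun n hn => if_neg (by simpa using hn)
      _ = T.card * c0 := by
          rw [Finset.sum_congr rfl fun n hn => if_pos (Finset.mem_range.1 hn),
            Finset.sum_const, Finset.card_range, hlen, nsmul_eq_mul]
  have hkey : c0 = ENNReal.ofReal (4 ^ l / k) * a := by
    rw [ha, hc0, ← ENNReal.ofReal_mul (by positivity)]
    congr 1
    have h1 : (4:ℝ) ^ l / k * (k * (ρ/2) ^ l) = 4 ^ l * (ρ/2) ^ l := by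
      field_simp
    rw [h1, ← Real.mul_rpow (by norm_num) (by positivity)]
    congr 1
    ring
  have hNc0 : (T.card : ℝ≥0∞) * c0 ≤ ENNReal.ofReal (4 ^ l / k) * ν U := by
    rw [hkey, ← mul_assoc, mul_comm (T.card : ℝ≥0∞), mul_assoc]
    refine mul_le_mul_right ?_ _
    rw [← nsmul_eq_mul]
    exact hfinsum T (by rw [hTS])
  refine le_trans (iInf_le_of_le t (iInf_le_of_le hcov (iInf_le_of_le hdiam le_rfl))) ?_
  exact hsum.trans hNc0

theorem stmt_11 {X : Type*} [EMetricSpace X] [CompleteSpace X]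
    [MeasurableSpace X] [BorelSpace X]
    (ν : Measure X) (k K l R : ℝ) (hk : 0 < k) (hkK : k ≤ K) (hl : 0 < l)
    (hR : 0 < R)
    (hreg : ∀ (x : X) (r : ℝ), 0 < r → r < R →
      ENNReal.ofReal (k * r ^ l) ≤ ν (EMetric.ball x (ENNReal.ofReal r)) ∧
      ν (EMetric.ball x (ENNReal.ofReal r)) ≤ ENNReal.ofReal (K * r ^ l)) :
    ∃ c : ℝ, 0 < c ∧ ∀ E : Set X, MeasurableSet E → IsSeparable E → ν E < ⊤ →
      μH[l] E < ⊤ ∧ ENNReal.ofReal c * μH[l] E ≤ ν E := by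
  have hlow : ∀ (x : X) (r : ℝ), 0 < r → r < R →
      ENNReal.ofReal (k * r ^ l) ≤ ν (EMetric.ball x (ENNReal.ofReal r)) :=
    fun x r h1 h2 => (hreg x r h1 h2).1
  have hfinball : ∀ x : X, ν (EMetric.ball x (ENNReal.ofReal (R/2))) ≠ ∞ := fun x =>
    (((hreg x (R/2) (by linarith) (by linarith)).2).trans_lt ENNReal.ofReal_lt_top).ne
  set C : ℝ≥0∞ := ENNReal.ofReal (4 ^ l / k) with hC
  have hC0 : C ≠ 0 := (ENNReal.ofReal_pos.2 (by positivity)).ne'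
  have hCtop : C ≠ ∞ := ENNReal.ofReal_ne_top
  refine ⟨k / 4 ^ l, by positivity, fun E hE hsepE hνE => ?_⟩
  have main : μH[l] E ≤ C * ν E := by
    refine ENNReal.le_of_forall_pos_le_add fun ε' hε' hb => ?_
    set ε : ℝ≥0∞ := ↑ε' / C with hεdef
    have hεne : ε ≠ 0 := by
      rw [hεdef, Ne, ENNReal.div_eq_zero_iff]
      push_neg
      exact ⟨by exact_mod_cast hε'.ne', hCtop⟩
    have hεtop : ε ≠ ∞ := (ENNReal.div_lt_top ENNReal.coe_ne_top hC0).ne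
    obtain ⟨U, hUo, hEU, hUν⟩ := aux_outerreg ν hE hsepE (ENNReal.ofReal (R/2))
      (ENNReal.ofReal_pos.2 (by linarith)) hfinball ε hεne
    have hνUfin : ν U ≠ ∞ :=
      (hUν.trans_lt (ENNReal.add_lt_top.2 ⟨hνE, hεtop.lt_top⟩)).ne
    set F : ℕ → Set X := fun m =>
      E ∩ {x | ENNReal.ofReal (1/(m+1)) ≤ EMetric.infEdist x Uᶜ} with hF
    have hmono : Monotone F := by
      intro m m' hmm'
      refine Set.inter_subset_inter_right _ fun x hx => ?_
      simp only [mem_setOf_eq] at hx ⊢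
      refine le_trans (ENNReal.ofReal_le_ofReal ?_) hx
      apply one_div_le_one_div_of_le
      · positivity
      · have : (m : ℝ) ≤ m' := by exact_mod_cast hmm'
        linarith
    have hcup : ⋃ m, F m = E := by
      refine Subset.antisymm (iUnion_subset fun m => inter_subset_left) fun x hx => ?_
      have hxU : x ∈ U := hEU hx
      have h1 : x ∉ closure Uᶜ := by
        rw [hUo.isClosed_compl.closure_eq]
        exact fun h => h hxU
      have h2 : 0 < EMetric.infEdist x Uᶜ := EMetric.infEdist_pos_iff_notMem_closure.2 h1
      by_cases htop : EMetric.infEdist x Uᶜ = ∞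
      · exact mem_iUnion.2 ⟨0, hx, by rw [mem_setOf_eq, htop]; exact le_top⟩
      · obtain ⟨m, hm⟩ := exists_nat_one_div_lt (ENNReal.toReal_pos h2.ne' htop)
        refine mem_iUnion.2 ⟨m, hx, ?_⟩
        calc ENNReal.ofReal (1/(m+1)) ≤ ENNReal.ofReal (EMetric.infEdist x Uᶜ).toReal :=
              ENNReal.ofReal_le_ofReal (by push_cast; exact hm.le)
          _ = EMetric.infEdist x Uᶜ := ENNReal.ofReal_toReal htop
    have hFbound : ∀ m, μH[l] (F m) ≤ C * ν U := by
      intro m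
      refine aux_coverbound ν k l R hk hl hR hlow (F m) U hνUfin (1/(m+1))
        (by positivity) ?_
      intro x hx y hy
      by_contra hyU
      have h1 : EMetric.infEdist x Uᶜ ≤ edist x y := EMetric.infEdist_le_edist_of_mem hyU
      have h2 : edist x y < ENNReal.ofReal (1/(m+1)) := by
        rw [edist_comm]; exact hy
      exact (lt_irrefl _ ((hx.2.trans h1).trans_lt h2)).elim
    have hEsup : μH[l] E = ⨆ m, μH[l] (F m) := by
      conv_lhs => rw [← hcup]
      exact hmono.directed_le.measure_iUnion
    rw [hEsup]
    refine iSup_le fun m => (hFbound m).trans ?_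
    calc C * ν U ≤ C * (ν E + ε) := mul_le_mul_right hUν _
      _ = C * ν E + C * ε := mul_add _ _ _
      _ = C * ν E + ε' := by rw [hεdef, ENNReal.mul_div_cancel hC0 hCtop]
  constructor
  · exact main.trans_lt (ENNReal.mul_lt_top ENNReal.ofReal_lt_top hνE)
  · calc ENNReal.ofReal (k / 4 ^ l) * μH[l] E
        ≤ ENNReal.ofReal (k / 4 ^ l) * (C * ν E) := mul_le_mul_right main _
      _ = ENNReal.ofReal (k / 4 ^ l * (4 ^ l / k)) * ν E := by
          rw [← mul_assoc, hC, ← ENNReal.ofReal_mul (by positivity)]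
      _ = ν E := by
          rw [show k / 4 ^ l * (4 ^ l / k) = 1 by
            field_simp, ENNReal.ofReal_one, one_mul]
end

section
/- Let (X,d) be a metric space, δ > 0, and suppose X is δ-connected in the sense that for all x,y with d(x,y) ≥ δ there is a finite chain x = x₀, x₁, …, x_n = y with d(x_i, x_{i+1}) ≤ δ and n·δ ≤ C·d(x,y) for a fixed constant C ≥ 1. Let Y ⊆ X satisfy: for every point of X one can choose a point of Y within distance (3/2)δ. Then Y is 4δ-connected with constant C' depending only on C: for x,y ∈ Y with d(x,y) ≥ 4δ there is a chain in Y from x to y with steps ≤ 4δ and length n satisfying 4nδ ≤ C'·d(x,y). -/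
theorem stmt_16 (C : ℝ) (hC : 1 ≤ C) :
    ∃ C' : ℝ, 0 < C' ∧
      ∀ (X : Type) [MetricSpace X] (δ : ℝ), 0 < δ →
        (∀ x y : X, δ ≤ dist x y → ∃ (n : ℕ) (z : ℕ → X), z 0 = x ∧ z n = y ∧
          (∀ i < n, dist (z i) (z (i + 1)) ≤ δ) ∧ (n : ℝ) * δ ≤ C * dist x y) →
        ∀ Y : Set X, (∀ x : X, ∃ y ∈ Y, dist x y ≤ (3 / 2) * δ) →
          ∀ x ∈ Y, ∀ y ∈ Y, 4 * δ ≤ dist x y →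
            ∃ (n : ℕ) (z : ℕ → X), z 0 = x ∧ z n = y ∧
              (∀ i ≤ n, z i ∈ Y) ∧
              (∀ i < n, dist (z i) (z (i + 1)) ≤ 4 * δ) ∧
              (n : ℝ) * (4 * δ) ≤ C' * dist x y := by
  refine ⟨4 * C, by linarith, ?_⟩
  intro X _ δ hδ hchain Y hY x hx y hy hxy
  obtain ⟨n, z, hz0, hzn, hstep, hlen⟩ := hchain x y (by linarith)
  choose f hfY hfd using hY
  have hn0 : n ≠ 0 := by
    rintro rfl
    rw [hz0] at hzn
    have : dist x y = 0 := by rw [hzn]; simp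
    linarith
  set w : ℕ → X := fun i => if i = 0 then x else if n ≤ i then y else f (z i) with hw
  have hwz : ∀ i ≤ n, dist (w i) (z i) ≤ (3 / 2) * δ := by
    intro i hi
    by_cases h0 : i = 0
    · subst h0; simp [hw, hz0]; positivity
    · by_cases hn : n ≤ i
      · have hin : i = n := le_antisymm hi hn
        subst hin
        simp [hw, h0, hzn]; positivity
      · simp only [hw, if_neg h0, if_neg hn]
        rw [dist_comm]; exact hfd (z i)
  refine ⟨n, w, by simp [hw], ?_, ?_, ?_, ?_⟩
  · simp [hw, hn0]
  · intro i hi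
    by_cases h0 : i = 0
    · simpa [hw, h0] using hx
    · by_cases hn : n ≤ i
      · simpa [hw, h0, hn] using hy
      · simpa [hw, h0, hn] using hfY (z i)
  · intro i hi
    have h1 : dist (w i) (w (i + 1)) ≤
        dist (w i) (z i) + dist (z i) (z (i + 1)) + dist (z (i + 1)) (w (i + 1)) :=
      dist_triangle4 _ _ _ _
    have h2 := hwz i (le_of_lt hi)
    have h3 := hwz (i + 1) hi
    rw [dist_comm] at h3
    have h4 := hstep i hi
    linarith
  · nlinarith [hlen]
end

section
/- Let (X,d) be an extended metric space all of whose bounded components are separable. Then the σ-algebra generated by the open balls of finite radius (the ball Borel structure) equals the family of Borel sets A such that A or its complement is contained in a countable union of bounded components of X. -/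
open MeasureTheory TopologicalSpace
open scoped ENNReal

namespace Stmt19Aux

variable {X : Type*} [EMetricSpace X]

def ballSA (X : Type*) [EMetricSpace X] : MeasurableSpace X :=
  MeasurableSpace.generateFrom
    {S : Set X | ∃ (x : X) (r : ℝ≥0∞), r < ⊤ ∧ S = EMetric.ball x r}

lemma meas_ball (x : X) {r : ℝ≥0∞} (hr : r < ⊤) :
    MeasurableSet[ballSA X] (EMetric.ball x r) :=
  MeasurableSpace.measurableSet_generateFrom ⟨x, r, hr, rfl⟩

lemma meas_comp (x : X) : MeasurableSet[ballSA X] {y : X | edist x y < ⊤} := by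
  have h : {y : X | edist x y < ⊤} = ⋃ n : ℕ, EMetric.ball x n := by
    ext y
    simp only [Set.mem_setOf_eq, Set.mem_iUnion, EMetric.mem_ball, edist_comm]
    constructor
    · intro h
      obtain ⟨n, hn⟩ := ENNReal.exists_nat_gt h.ne
      exact ⟨n, show edist y x < n by rwa [edist_comm]⟩
    · rintro ⟨n, hn⟩
      exact (edist_comm x y).trans_lt ((show edist y x < n from hn).trans (ENNReal.natCast_lt_top n))
  rw [h]
  exact MeasurableSet.iUnion fun n => meas_ball x (ENNReal.natCast_lt_top n)

lemma meas_open_inter (x : X) (hsep : IsSeparable {y : X | edist x y < ⊤})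
    {U : Set X} (hU : IsOpen U) :
    MeasurableSet[ballSA X] (U ∩ {y : X | edist x y < ⊤}) := by
  classical
  set C : Set X := {y : X | edist x y < ⊤} with hCdef
  obtain ⟨c, hcount, hcl⟩ := hsep
  have key : U ∩ C = ⋃ t ∈ c, ⋃ n : ℕ,
      if EMetric.ball t (((n + 1 : ℕ) : ℝ≥0∞))⁻¹ ⊆ U ∩ C
      then EMetric.ball t (((n + 1 : ℕ) : ℝ≥0∞))⁻¹ else ∅ := by
    apply Set.Subset.antisymm
    · intro y hy
      obtain ⟨ε, εpos, hεU⟩ := EMetric.isOpen_iff.1 hU y hy.1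
      have hε2 : 0 < ε / 2 := ENNReal.div_pos εpos.ne' (by norm_num)
      obtain ⟨n, hn⟩ := ENNReal.exists_inv_nat_lt hε2.ne'
      set δ : ℝ≥0∞ := (((n + 1 : ℕ) : ℝ≥0∞))⁻¹ with hδdef
      have hδn : δ ≤ ((n : ℕ) : ℝ≥0∞)⁻¹ := by
        apply ENNReal.inv_le_inv.2
        exact_mod_cast Nat.le_succ n
      have hδ : δ < ε / 2 := lt_of_le_of_lt hδn hn
      have hδpos : 0 < δ := ENNReal.inv_pos.2 (ENNReal.natCast_ne_top (n+1))
      have hδtop : δ < ⊤ := ENNReal.inv_lt_top.2 (by exact_mod_cast Nat.succ_pos n)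
      have hycl : y ∈ closure c := hcl hy.2
      obtain ⟨t, htc, hyt⟩ := EMetric.mem_closure_iff.1 hycl δ hδpos
      have hsub : EMetric.ball t δ ⊆ U ∩ C := by
        intro z hz
        replace hz : edist z t < δ := hz
        have hty : edist t y < δ := by rwa [edist_comm] at hyt
        have hzy : edist z y < δ + δ :=
          lt_of_le_of_lt (edist_triangle z t y) (ENNReal.add_lt_add hz hty)
        have hδδ : δ + δ < ε := by
          have := ENNReal.add_lt_add hδ hδ
          rwa [ENNReal.add_halves] at this
        constructor
        · exact hεU (EMetric.mem_ball.2 (hzy.trans hδδ))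
        · show edist x z < ⊤
          calc edist x z ≤ edist x y + edist y z := edist_triangle x y z
            _ < ⊤ := ENNReal.add_lt_top.2 ⟨hy.2, by
                rw [edist_comm]
                exact hzy.trans (by
                  exact lt_of_lt_of_le (ENNReal.add_lt_add hδtop hδtop) le_top)⟩
      refine Set.mem_iUnion₂.2 ⟨t, htc, Set.mem_iUnion.2 ⟨n, ?_⟩⟩
      rw [if_pos hsub]
      exact EMetric.mem_ball.2 hyt
    · refine Set.iUnion₂_subset fun t ht => Set.iUnion_subset fun n => ?_
      split_ifs with h
      · exact h
      · exact Set.empty_subset _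
  rw [key]
  refine MeasurableSet.biUnion hcount fun t _ => MeasurableSet.iUnion fun n => ?_
  split_ifs
  · exact meas_ball t (ENNReal.inv_lt_top.2 (by exact_mod_cast Nat.succ_pos n))
  · exact @MeasurableSet.empty X (ballSA X)

lemma meas_borel_inter (x : X) (hsep : IsSeparable {y : X | edist x y < ⊤})
    {A : Set X} (hA : MeasurableSet[borel X] A) :
    MeasurableSet[ballSA X] (A ∩ {y : X | edist x y < ⊤}) := by
  set C : Set X := {y : X | edist x y < ⊤} with hCdef
  let m' : MeasurableSpace X :=
    { MeasurableSet' := fun A => MeasurableSet[ballSA X] (A ∩ C)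
      measurableSet_empty := by
        simp only [Set.empty_inter]
        exact @MeasurableSet.empty X (ballSA X)
      measurableSet_compl := fun s hs => by
        show MeasurableSet[ballSA X] (sᶜ ∩ C)
        have h : sᶜ ∩ C = C \ (s ∩ C) := by
          ext z; simp only [Set.mem_inter_iff, Set.mem_compl_iff, Set.mem_diff]; tauto
        rw [h]
        exact (meas_comp x).diff hs
      measurableSet_iUnion := fun f hf => by
        show MeasurableSet[ballSA X] ((⋃ i, f i) ∩ C)
        rw [Set.iUnion_inter]
        exact MeasurableSet.iUnion hf }
  have hle : borel X ≤ m' :=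
    MeasurableSpace.generateFrom_le fun U hU => meas_open_inter x hsep hU
  exact hle _ hA

end Stmt19Aux

open Stmt19Aux

theorem stmt_19 {X : Type*} [EMetricSpace X]
    (hsep : ∀ x : X, IsSeparable {y : X | edist x y < ⊤}) (A : Set X) :
    MeasurableSet[MeasurableSpace.generateFrom
        {S : Set X | ∃ (x : X) (r : ℝ≥0∞), r < ⊤ ∧ S = EMetric.ball x r}] A ↔
      MeasurableSet[borel X] A ∧
        ((∃ D : Set X, D.Countable ∧ A ⊆ ⋃ x ∈ D, {y : X | edist x y < ⊤}) ∨
         (∃ D : Set X, D.Countable ∧ Aᶜ ⊆ ⋃ x ∈ D, {y : X | edist x y < ⊤})) := by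
  constructor
  · intro hA
    let m' : MeasurableSpace X :=
      { MeasurableSet' := fun A => MeasurableSet[borel X] A ∧
          ((∃ D : Set X, D.Countable ∧ A ⊆ ⋃ x ∈ D, {y : X | edist x y < ⊤}) ∨
           (∃ D : Set X, D.Countable ∧ Aᶜ ⊆ ⋃ x ∈ D, {y : X | edist x y < ⊤}))
        measurableSet_empty :=
          ⟨@MeasurableSet.empty X (borel X), Or.inl ⟨∅, Set.countable_empty, by simp⟩⟩
        measurableSet_compl := fun s hs => by
          refine ⟨hs.1.compl, ?_⟩
          rcases hs.2 with h | h
          · exact Or.inr (by simpa using h)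
          · exact Or.inl h
        measurableSet_iUnion := fun f hf => by
          refine ⟨MeasurableSet.iUnion fun i => (hf i).1, ?_⟩
          by_cases hall : ∀ i, ∃ D : Set X, D.Countable ∧
              f i ⊆ ⋃ x ∈ D, {y : X | edist x y < ⊤}
          · choose D hDc hDs using hall
            refine Or.inl ⟨⋃ i, D i, Set.countable_iUnion hDc, ?_⟩
            refine Set.iUnion_subset fun i => (hDs i).trans ?_
            exact Set.biUnion_subset_biUnion_left (Set.subset_iUnion D i)
          · push_neg at hall
            obtain ⟨i, hi⟩ := hall
            rcases (hf i).2 with h | h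
            · obtain ⟨D, hDc, hDs⟩ := h
              exact absurd hDs (hi D hDc)
            · obtain ⟨D, hDc, hDs⟩ := h
              exact Or.inr ⟨D, hDc,
                (Set.compl_subset_compl.2 (Set.subset_iUnion f i)).trans hDs⟩ }
    have hle : MeasurableSpace.generateFrom
        {S : Set X | ∃ (x : X) (r : ℝ≥0∞), r < ⊤ ∧ S = EMetric.ball x r} ≤ m' := by
      refine MeasurableSpace.generateFrom_le ?_
      rintro S ⟨x, r, hr, rfl⟩
      refine ⟨MeasurableSpace.measurableSet_generateFrom EMetric.isOpen_ball,
        Or.inl ⟨{x}, Set.countable_singleton x, ?_⟩⟩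
      intro z hz
      simp only [Set.mem_singleton_iff, Set.iUnion_iUnion_eq_left, Set.mem_setOf_eq]
      replace hz : edist z x < r := hz
      rw [edist_comm]
      exact hz.trans hr
    exact hle _ hA
  · rintro ⟨hB, h | h⟩
    · obtain ⟨D, hDc, hDs⟩ := h
      have hA : A = ⋃ x ∈ D, A ∩ {y : X | edist x y < ⊤} := by
        apply Set.Subset.antisymm
        · intro z hz
          obtain ⟨x, hx⟩ := Set.mem_iUnion.1 (hDs hz)
          obtain ⟨hxD, hxz⟩ := Set.mem_iUnion.1 hx
          exact Set.mem_iUnion₂.2 ⟨x, hxD, hz, hxz⟩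
        · exact Set.iUnion₂_subset fun x _ => Set.inter_subset_left
      rw [hA]
      exact MeasurableSet.biUnion hDc fun x _ => meas_borel_inter x (hsep x) hB
    · obtain ⟨D, hDc, hDs⟩ := h
      have hc : MeasurableSet[ballSA X] Aᶜ := by
        have hA : Aᶜ = ⋃ x ∈ D, Aᶜ ∩ {y : X | edist x y < ⊤} := by
          apply Set.Subset.antisymm
          · intro z hz
            obtain ⟨x, hx⟩ := Set.mem_iUnion.1 (hDs hz)
            obtain ⟨hxD, hxz⟩ := Set.mem_iUnion.1 hx
            exact Set.mem_iUnion₂.2 ⟨x, hxD, hz, hxz⟩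
          · exact Set.iUnion₂_subset fun x _ => Set.inter_subset_left
        rw [hA]
        exact MeasurableSet.biUnion hDc fun x _ => meas_borel_inter x (hsep x) hB.compl
      exact (by simpa using hc.compl : MeasurableSet[ballSA X] A)
end
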